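/- If π is an irreducible permutation of {1,…,m}, then the permutation bπ defined by bπ(j) = π(j) if π(j) ≤ π(m), bπ(j) = π(j)+1 if π(m) < π(j) < m, and bπ(j) = π(m)+1 if π(j) = m, is also irreducible. -/

import Mathlib

/-- A map `f` on `{0,…,m-1}` (0-based version of `{1,…,m}`) is irreducible if for every
`0 < k < m` the initial segment `{0,…,k-1}` is *not* invariant. -/
def RauzyIrred {m : ℕ} (f : Fin m → Fin m) : Prop :=
  ∀ k : ℕ, 0 < k → k < m → ∃ j : Fin m, (j : ℕ) < k ∧ k ≤ (f j : ℕ)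

/-!
Write `D = π (m - 1)`. Since `bπ` is injective and takes only the letter `m - 1` to `D`, an initial
segment `[0, k)` invariant under `bπ` is mapped bijectively onto itself, so it cannot contain `D`,
i.e. `D ≥ k`. On the other hand `bπ j ≥ π j` unless `π j = m - 1`, so the witness `j < k ≤ π j` of
irreducibility of `π` must have `π j = m - 1`, and then `bπ j = D + 1 < k`.
-/

/-- `f` is the Rauzy image `bπ` of `π`, where `last` plays the role of the position `m - 1`. -/
structure IsRauzyB {m : ℕ} (π : Equiv.Perm (Fin m)) (last : Fin m) (f : Fin m → Fin m) : Prop where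
  of_le : ∀ j, (π j : ℕ) ≤ π last → f j = π j
  of_lt : ∀ j, (π last : ℕ) < π j → (π j : ℕ) < m - 1 → (f j : ℕ) = π j + 1
  of_eq : ∀ j, (π j : ℕ) = m - 1 → (f j : ℕ) = π last + 1

namespace IsRauzyB

variable {m : ℕ} {π : Equiv.Perm (Fin m)} {last : Fin m} {f : Fin m → Fin m}

theorem val_apply (hf : IsRauzyB π last f) (j : Fin m) :
    (f j : ℕ) = if (π j : ℕ) ≤ π last then (π j : ℕ)
      else if (π j : ℕ) < m - 1 then (π j : ℕ) + 1 else (π last : ℕ) + 1 := by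
  have := (π j).isLt
  split_ifs with hle hlt
  · rw [hf.of_le j hle]
  · exact hf.of_lt j (by omega) hlt
  · exact hf.of_eq j (by omega)

theorem injective (hf : IsRauzyB π last f) : Function.Injective f := by
  intro a b hab
  have hval := congrArg Fin.val hab
  rw [hf.val_apply, hf.val_apply] at hval
  have := (π a).isLt
  have := (π b).isLt
  refine π.injective (Fin.ext ?_)
  split_ifs at hval <;> omega

theorem eq_last_of_val_eq (hf : IsRauzyB π last f) {j : Fin m} (hj : (f j : ℕ) = π last) :
    j = last := by
  rw [hf.val_apply] at hj
  refine π.injective (Fin.ext ?_)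
  split_ifs at hj <;> omega

theorem le_val_apply (hf : IsRauzyB π last f) {j : Fin m} (hj : (π j : ℕ) ≠ m - 1) :
    (π j : ℕ) ≤ f j := by
  rw [hf.val_apply]
  split_ifs <;> omega

theorem rauzyIrred (hf : IsRauzyB π last f) (hlast : (last : ℕ) = m - 1) (hπ : RauzyIrred π) :
    RauzyIrred f := by
  intro k hk hkm
  by_contra! hinv
  obtain ⟨j, hjk, hkj⟩ := hπ k hk hkm
  have hπj : (π j : ℕ) = m - 1 := by
    by_contra hne
    have := hf.le_val_apply hne
    have := hinv j hjk
    omega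
  have hDk : (π last : ℕ) < k := by
    have := hinv j hjk
    rw [hf.of_eq j hπj] at this
    omega
  let s : Set (Fin m) := {i | (i : ℕ) < k}
  have hbij : Set.BijOn f s s :=
    (s.toFinite.injOn_iff_bijOn_of_mapsTo fun i hi => hinv i hi).1 hf.injective.injOn
  obtain ⟨i, hik, hi⟩ := hbij.surjOn (show π last ∈ s from hDk)
  have hlast_lt : (last : ℕ) < k := hf.eq_last_of_val_eq (congrArg Fin.val hi) ▸ hik
  omega

end IsRauzyB

/-- The Rauzy operation `b` preserves irreducibility. -/
theorem rauzy_b_irreducible {m : ℕ} (hm : 2 ≤ m) (π : Equiv.Perm (Fin m))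
    (hπ : RauzyIrred π) (f : Fin m → Fin m)
    (h1 : ∀ j : Fin m, ((π j : Fin m) : ℕ) ≤ ((π ⟨m - 1, by omega⟩ : Fin m) : ℕ) →
      f j = π j)
    (h2 : ∀ j : Fin m, ((π ⟨m - 1, by omega⟩ : Fin m) : ℕ) < ((π j : Fin m) : ℕ) →
      ((π j : Fin m) : ℕ) < m - 1 → ((f j : Fin m) : ℕ) = ((π j : Fin m) : ℕ) + 1)
    (h3 : ∀ j : Fin m, ((π j : Fin m) : ℕ) = m - 1 →
      ((f j : Fin m) : ℕ) = ((π ⟨m - 1, by omega⟩ : Fin m) : ℕ) + 1) :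
    RauzyIrred f :=
  (IsRauzyB.mk h1 h2 h3).rauzyIrred rfl hπ
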